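/- On the set of n×n row-stochastic matrices, the function D(P₁,P₂) = 2·√( Σ_{i=1}^{n} arccos²( Σ_{j=1}^{n} √(P₁(i,j)·P₂(i,j)) ) ) is a metric: it is nonnegative, D(P₁,P₂) = D(P₂,P₁), D(P₁,P₂) = 0 if and only if P₁ = P₂, and D(P₁,P₃) ≤ D(P₁,P₂) + D(P₂,P₃) for all n×n row-stochastic matrices P₁, P₂, P₃. -/

import Mathlib

/-!
Taking entrywise square roots sends a probability vector `p` to a unit vector `√p` of
`EuclideanSpace`, and the Bhattacharyya coefficient `Σⱼ √(pⱼ qⱼ)` becomes the inner product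
`⟪√p, √q⟫`; so its `arccos` is the angle between `√p` and `√q`, which satisfies the triangle
inequality. Hence `D(P₁, P₂)` is twice the Euclidean norm of the vector of row angles, and the
triangle inequality for `D` follows from the row-wise one by Minkowski's inequality.
-/

open Matrix BigOperators

/-- A row-stochastic matrix: nonnegative entries, each row summing to `1`. -/
def IsRowStochastic {n : ℕ} (P : Matrix (Fin n) (Fin n) ℝ) : Prop :=
  (∀ i j, 0 ≤ P i j) ∧ ∀ i, ∑ j, P i j = 1

/-- The stochastic matrix distance
`D(P₁,P₂) = 2·√( Σ_i arccos²( Σ_j √(P₁(i,j)·P₂(i,j)) ) )`. -/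
noncomputable def stochMatDist {n : ℕ} (P1 P2 : Matrix (Fin n) (Fin n) ℝ) : ℝ :=
  2 * Real.sqrt (∑ i, Real.arccos (∑ j, Real.sqrt (P1 i j * P2 i j)) ^ 2)

open Real InnerProductGeometry
open scoped InnerProductSpace

section SumOfSquares

variable {ι : Type*} [Fintype ι]

lemma norm_toLp_two_eq_sqrt_sum_sq (a : ι → ℝ) :
    ‖(WithLp.toLp 2 a : EuclideanSpace ℝ ι)‖ = √(∑ i, a i ^ 2) := by
  simp [EuclideanSpace.norm_eq]

lemma sqrt_sum_sq_le_add_of_le_add {a b c : ι → ℝ} (hc : ∀ i, 0 ≤ c i)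
    (hcab : ∀ i, c i ≤ a i + b i) :
    √(∑ i, c i ^ 2) ≤ √(∑ i, a i ^ 2) + √(∑ i, b i ^ 2) := by
  simp only [← norm_toLp_two_eq_sqrt_sum_sq]
  calc ‖(WithLp.toLp 2 c : EuclideanSpace ℝ ι)‖
      ≤ ‖(WithLp.toLp 2 a : EuclideanSpace ℝ ι) + WithLp.toLp 2 b‖ := by
        simp only [← WithLp.toLp_add, norm_toLp_two_eq_sqrt_sum_sq]
        gcongr with i
        exacts [hc i, hcab i]
    _ ≤ _ := norm_add_le _ _

lemma sqrt_sum_sq_eq_zero_iff {a : ι → ℝ} : √(∑ i, a i ^ 2) = 0 ↔ ∀ i, a i = 0 := by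
  rw [← norm_toLp_two_eq_sqrt_sum_sq, norm_eq_zero, WithLp.toLp_eq_zero, funext_iff]
  rfl

end SumOfSquares

section SqrtEmbedding

variable {ι : Type*}

noncomputable def sqrtVec (p : ι → ℝ) : EuclideanSpace ℝ ι :=
  WithLp.toLp 2 fun j => √(p j)

lemma sqrtVec_inj {p q : ι → ℝ} (hp : ∀ j, 0 ≤ p j) (hq : ∀ j, 0 ≤ q j) :
    sqrtVec p = sqrtVec q ↔ p = q := by
  simp only [sqrtVec, (WithLp.toLp_injective 2).eq_iff, funext_iff, Real.sqrt_inj (hp _) (hq _)]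

variable [Fintype ι]

lemma norm_sqrtVec {p : ι → ℝ} (hp : ∀ j, 0 ≤ p j) : ‖sqrtVec p‖ = √(∑ j, p j) := by
  simp only [sqrtVec, norm_toLp_two_eq_sqrt_sum_sq, Real.sq_sqrt (hp _)]

lemma inner_sqrtVec {p : ι → ℝ} (hp : ∀ j, 0 ≤ p j) (q : ι → ℝ) :
    ⟪sqrtVec p, sqrtVec q⟫_ℝ = ∑ j, √(p j * q j) := by
  simp [sqrtVec, PiLp.inner_apply, Real.sqrt_mul (hp _), mul_comm]

lemma arccos_sum_sqrt_mul_eq_angle {p q : ι → ℝ} (hp : ∀ j, 0 ≤ p j) (hq : ∀ j, 0 ≤ q j)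
    (hp1 : ∑ j, p j = 1) (hq1 : ∑ j, q j = 1) :
    arccos (∑ j, √(p j * q j)) = angle (sqrtVec p) (sqrtVec q) := by
  rw [angle, inner_sqrtVec hp, norm_sqrtVec hp, norm_sqrtVec hq, hp1, hq1]
  simp

end SqrtEmbedding

namespace IsRowStochastic

variable {n : ℕ} {P Q : Matrix (Fin n) (Fin n) ℝ}

lemma norm_sqrtVec_row (hP : IsRowStochastic P) (i : Fin n) : ‖sqrtVec (P i)‖ = 1 := by
  rw [norm_sqrtVec (hP.1 i), hP.2 i, Real.sqrt_one]

lemma stochMatDist_eq_angle (hP : IsRowStochastic P) (hQ : IsRowStochastic Q) :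
    stochMatDist P Q = 2 * √(∑ i, angle (sqrtVec (P i)) (sqrtVec (Q i)) ^ 2) := by
  simp only [stochMatDist,
    arccos_sum_sqrt_mul_eq_angle (hP.1 _) (hQ.1 _) (hP.2 _) (hQ.2 _)]

end IsRowStochastic

section StochMatDist

variable {n : ℕ}

lemma stochMatDist_nonneg (P Q : Matrix (Fin n) (Fin n) ℝ) : 0 ≤ stochMatDist P Q := by
  unfold stochMatDist
  positivity

lemma stochMatDist_comm (P Q : Matrix (Fin n) (Fin n) ℝ) :
    stochMatDist P Q = stochMatDist Q P := by
  simp only [stochMatDist, mul_comm (P _ _)]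

variable {P Q R : Matrix (Fin n) (Fin n) ℝ}

lemma stochMatDist_eq_zero_iff (hP : IsRowStochastic P) (hQ : IsRowStochastic Q) :
    stochMatDist P Q = 0 ↔ P = Q := by
  rw [hP.stochMatDist_eq_angle hQ, mul_eq_zero, or_iff_right two_ne_zero, sqrt_sum_sq_eq_zero_iff]
  constructor
  · intro h
    funext i
    refine (sqrtVec_inj (hP.1 i) (hQ.1 i)).1 (eq_of_angle_eq_zero_of_norm_eq (h i) ?_)
    rw [hP.norm_sqrtVec_row, hQ.norm_sqrtVec_row]
  · rintro rfl i
    exact angle_self (norm_ne_zero_iff.1 (by simp [hP.norm_sqrtVec_row i]))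

lemma stochMatDist_triangle (hP : IsRowStochastic P) (hQ : IsRowStochastic Q)
    (hR : IsRowStochastic R) : stochMatDist P R ≤ stochMatDist P Q + stochMatDist Q R := by
  rw [hP.stochMatDist_eq_angle hQ, hQ.stochMatDist_eq_angle hR, hP.stochMatDist_eq_angle hR,
    ← mul_add]
  gcongr
  exact sqrt_sum_sq_le_add_of_le_add (fun _ => angle_nonneg _ _)
    (fun _ => angle_le_angle_add_angle _ _ _)

end StochMatDist

/-- the stochastic matrix distance is a metric on the set of `n×n`
row-stochastic matrices. -/
theorem stmt_9 (n : ℕ) :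
    (∀ P1 P2 : Matrix (Fin n) (Fin n) ℝ, IsRowStochastic P1 → IsRowStochastic P2 →
      0 ≤ stochMatDist P1 P2) ∧
    (∀ P1 P2 : Matrix (Fin n) (Fin n) ℝ, IsRowStochastic P1 → IsRowStochastic P2 →
      stochMatDist P1 P2 = stochMatDist P2 P1) ∧
    (∀ P1 P2 : Matrix (Fin n) (Fin n) ℝ, IsRowStochastic P1 → IsRowStochastic P2 →
      (stochMatDist P1 P2 = 0 ↔ P1 = P2)) ∧
    (∀ P1 P2 P3 : Matrix (Fin n) (Fin n) ℝ,
      IsRowStochastic P1 → IsRowStochastic P2 → IsRowStochastic P3 →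
      stochMatDist P1 P3 ≤ stochMatDist P1 P2 + stochMatDist P2 P3) :=
  ⟨fun P1 P2 _ _ => stochMatDist_nonneg P1 P2, fun P1 P2 _ _ => stochMatDist_comm P1 P2,
    fun _ _ => stochMatDist_eq_zero_iff, fun _ _ _ => stochMatDist_triangle⟩
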